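/- arXiv:1204.3366 — 3 statements merged into one kernel-verified Lean document; each statement's English description precedes it below -/
import Mathlib

section
/- Let R be a ring with identity, p an idempotent of R, and φ : R → pRp a corner isomorphism. The corner skew Laurent polynomial ring A = R[t₊, t₋, φ], with its natural ℤ-grading (deg t₊ = 1, deg t₋ = −1, A₀ = R), is a strongly graded ring if and only if φ(1) is a full idempotent of R (i.e., R·φ(1)·R = R). -/
/-- The product of two additive subgroups of a ring. -/
def sgMul {A : Type} [Ring A] (S T : AddSubgroup A) : AddSubgroup A :=
  AddSubgroup.closure {x | ∃ s ∈ S, ∃ t ∈ T, x = s * t}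

/-- A ℤ-graded ring `A = ⊕ᵢ Aᵢ` is *strongly graded* if `AᵢAⱼ = Aᵢ₊ⱼ` for all `i, j`. -/
def IsStronglyGraded {A : Type} [Ring A] (𝒜 : ℤ → AddSubgroup A) : Prop :=
  ∀ i j : ℤ, sgMul (𝒜 i) (𝒜 j) = 𝒜 (i + j)

/-!
If `1 ∈ A₁A₋₁` and `1 ∈ A₋₁A₁`, then `1 ∈ AᵢA₋ᵢ` for every `i` (from `1 ∈ AₐA_b` and
`1 ∈ A_cA_d` one gets `1 ∈ A_{a+c}A_{d+b}`, since `AₐA_b ⊆ Aₐ(A_cA_d)A_b`), and then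
`A_{i+j} ⊆ AᵢA₋ᵢA_{i+j} ⊆ AᵢAⱼ`. As `1 = t₋t₊ ∈ A₋₁A₁`, strong grading thus amounts to
`A₀ = A₁A₋₁`, and `A₁A₋₁` is the ideal of `A₀` generated by `t₊t₋`, because
`st = (st₋)(t₊t₋)(t₊t)` and `r(t₊t₋)r' = (rt₊)(t₋r')`.
Products of additive subgroups are handled as products of `ℤ`-submodules, which form an
ordered semiring.
-/

section GradedSubmodule

variable {ι R A : Type*} [CommSemiring R] [Semiring A] [Algebra R A]
  (ℳ : ι → Submodule R A)

theorem graded_mul_le [Add ι] [SetLike.GradedMul ℳ] (i j : ι) : ℳ i * ℳ j ≤ ℳ (i + j) :=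
  Submodule.mul_le.mpr fun _ ha _ hb => SetLike.mul_mem_graded ha hb

variable {ℳ}

theorem one_mem_graded_mul_add [Add ι] [SetLike.GradedMul ℳ] {a b c d : ι}
    (hab : (1 : A) ∈ ℳ a * ℳ b) (hcd : (1 : A) ∈ ℳ c * ℳ d) :
    (1 : A) ∈ ℳ (a + c) * ℳ (d + b) := by
  have hle : ℳ a * ℳ b ≤ ℳ (a + c) * ℳ (d + b) :=
    calc ℳ a * ℳ b = ℳ a * 1 * ℳ b := by rw [mul_one]
      _ ≤ ℳ a * (ℳ c * ℳ d) * ℳ b := by gcongr; exact Submodule.one_le.mpr hcd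
      _ = ℳ a * ℳ c * (ℳ d * ℳ b) := by simp only [mul_assoc]
      _ ≤ ℳ (a + c) * ℳ (d + b) := by gcongr <;> apply graded_mul_le
  exact hle hab

theorem graded_mul_eq_of_one_mem [AddGroup ι] [SetLike.GradedMul ℳ] {i : ι}
    (h : (1 : A) ∈ ℳ i * ℳ (-i)) (j : ι) : ℳ i * ℳ j = ℳ (i + j) := by
  refine (graded_mul_le ℳ i j).antisymm ?_
  calc ℳ (i + j) = 1 * ℳ (i + j) := (one_mul _).symm
    _ ≤ ℳ i * ℳ (-i) * ℳ (i + j) := by gcongr; exact Submodule.one_le.mpr h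
    _ = ℳ i * (ℳ (-i) * ℳ (i + j)) := mul_assoc _ _ _
    _ ≤ ℳ i * ℳ j := by
      gcongr
      simpa only [neg_add_cancel_left] using graded_mul_le ℳ (-i) (i + j)

end GradedSubmodule

section IntGradedSubmodule

variable {R A : Type*} [CommSemiring R] [Semiring A] [Algebra R A]
  {ℳ : ℤ → Submodule R A}

theorem one_mem_graded_mul_neg [SetLike.GradedMul ℳ]
    (h₁ : (1 : A) ∈ ℳ 1 * ℳ (-1)) (h₂ : (1 : A) ∈ ℳ (-1) * ℳ 1) (i : ℤ) :
    (1 : A) ∈ ℳ i * ℳ (-i) := by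
  induction i using Int.induction_on with
  | zero => simpa using one_mem_graded_mul_add h₁ h₂
  | succ i ih => simpa [add_comm] using one_mem_graded_mul_add h₁ ih
  | pred i ih => simpa [sub_eq_add_neg, add_comm] using one_mem_graded_mul_add h₂ ih

theorem forall_graded_mul_eq_iff [SetLike.GradedMonoid ℳ] (h : (1 : A) ∈ ℳ (-1) * ℳ 1) :
    (∀ i j, ℳ i * ℳ j = ℳ (i + j)) ↔ ℳ 0 ≤ ℳ 1 * ℳ (-1) :=
  ⟨fun hℳ => by simpa using (hℳ 1 (-1)).ge, fun h0 i =>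
    graded_mul_eq_of_one_mem (one_mem_graded_mul_neg (h0 (SetLike.one_mem_graded ℳ)) h i)⟩

end IntGradedSubmodule

section AddSubgroup

variable {A : Type} [Ring A]

theorem AddSubgroup.toIntSubmodule_sgMul (S T : AddSubgroup A) :
    (sgMul S T).toIntSubmodule = S.toIntSubmodule * T.toIntSubmodule := by
  rw [sgMul, AddSubgroup.toIntSubmodule_closure, Submodule.mul_eq_span_mul_set]
  congr 1
  ext x
  simp [Set.mem_mul, eq_comm]

theorem isStronglyGraded_iff_toIntSubmodule (𝒜 : ℤ → AddSubgroup A) :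
    IsStronglyGraded 𝒜 ↔
      ∀ i j, (𝒜 i).toIntSubmodule * (𝒜 j).toIntSubmodule = (𝒜 (i + j)).toIntSubmodule := by
  simp only [IsStronglyGraded, ← AddSubgroup.toIntSubmodule_sgMul, EmbeddingLike.apply_eq_iff_eq]

instance AddSubgroup.gradedMonoid_toIntSubmodule {ι : Type*} [AddMonoid ι]
    (𝒜 : ι → AddSubgroup A) [SetLike.GradedMonoid 𝒜] :
    SetLike.GradedMonoid fun i => (𝒜 i).toIntSubmodule where
  one_mem := SetLike.one_mem_graded 𝒜
  mul_mem i j _ _ := SetLike.mul_mem_graded (A := 𝒜) (i := i) (j := j)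

theorem closure_zero_mul_mul_zero_eq_sgMul (𝒜 : ℤ → AddSubgroup A) [SetLike.GradedMonoid 𝒜]
    {tp tm : A} (htp : tp ∈ 𝒜 1) (htm : tm ∈ 𝒜 (-1)) (hinv : tm * tp = 1) :
    AddSubgroup.closure {x | ∃ r ∈ 𝒜 0, ∃ r' ∈ 𝒜 0, x = r * (tp * tm) * r'} =
      sgMul (𝒜 1) (𝒜 (-1)) := by
  refine le_antisymm (AddSubgroup.closure_le _ |>.mpr ?_) (AddSubgroup.closure_le _ |>.mpr ?_)
  · rintro _ ⟨r, hr, r', hr', rfl⟩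
    refine AddSubgroup.subset_closure ⟨r * tp, by simpa using SetLike.mul_mem_graded hr htp,
      tm * r', by simpa using SetLike.mul_mem_graded htm hr', by noncomm_ring⟩
  · rintro _ ⟨s, hs, t, ht, rfl⟩
    refine AddSubgroup.subset_closure ⟨s * tm, by simpa using SetLike.mul_mem_graded hs htm,
      tp * t, by simpa using SetLike.mul_mem_graded htp ht, ?_⟩
    simp only [mul_assoc, ← mul_assoc tm, hinv, one_mul]

end AddSubgroup

/-- A corner skew Laurent polynomial ring `A = R[t₊, t₋, φ]`
(with `R = A₀`, `φ : R → pRp`, `φ(r) = t₊ r t₋`, `p = t₊t₋ = φ(1)`) is, with its natural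
ℤ-grading, exactly a ℤ-graded ring `A` together with `t₊ ∈ A₁`, `t₋ ∈ A₋₁` with
`t₋t₊ = 1` (by Ara–González-Barroso–Goodearl–Pardo, Lemma 2.4; the relations
`r t₋ = t₋ φ(r)` and `t₊ r = φ(r) t₊` as well as `Aᵢ = R pᵢ t₊ⁱ`, `A₋ᵢ = t₋ⁱ pᵢ R` are
then automatic).  The theorem: `A` is strongly graded if and only if `φ(1) = t₊t₋` is a
full idempotent of `R = A₀`, i.e. the two-sided ideal of `A₀` generated by `t₊t₋`
(the additive group generated by `r (t₊t₋) r'` with `r, r' ∈ A₀`) is all of `A₀`. -/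
theorem corner_skew_laurent_strongly_graded_iff_full {A : Type} [Ring A]
    (𝒜 : ℤ → AddSubgroup A) [GradedRing 𝒜]
    (tp tm : A) (htp : tp ∈ 𝒜 1) (htm : tm ∈ 𝒜 (-1)) (hinv : tm * tp = 1) :
    IsStronglyGraded 𝒜 ↔
      (∀ a ∈ 𝒜 0, a ∈ AddSubgroup.closure
        {x | ∃ r ∈ 𝒜 0, ∃ r' ∈ 𝒜 0, x = r * (tp * tm) * r'}) := by
  rw [closure_zero_mul_mul_zero_eq_sgMul 𝒜 htp htm hinv, isStronglyGraded_iff_toIntSubmodule]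
  change _ ↔ 𝒜 0 ≤ sgMul (𝒜 1) (𝒜 (-1))
  rw [← AddSubgroup.toIntSubmodule.le_iff_le, AddSubgroup.toIntSubmodule_sgMul]
  exact forall_graded_mul_eq_iff (hinv ▸ Submodule.mul_mem_mul htm htp)
end

section
/- Let E be a finite directed graph. The Leavitt path algebra L_K(E) over a field K, with its natural ℤ-grading, is a strongly graded ring if and only if E has no sinks. -/
/-- A finite directed graph. -/
structure DirGraph where
  V : Type
  E : Type
  [fintypeV : Fintype V]
  [fintypeE : Fintype E]
  [decEqV : DecidableEq V]
  [decEqE : DecidableEq E]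
  /-- source of an edge -/
  s : E → V
  /-- range of an edge -/
  r : E → V

attribute [instance] DirGraph.fintypeV DirGraph.fintypeE DirGraph.decEqV DirGraph.decEqE

namespace DirGraph
/-- A sink is a vertex emitting no edges. -/
def IsSink (G : DirGraph) (v : G.V) : Prop := ∀ e : G.E, G.s e ≠ v
/-- A source is a vertex receiving no edges. -/
def IsSource (G : DirGraph) (v : G.V) : Prop := ∀ e : G.E, G.r e ≠ v
end DirGraph

/-- Generators of the Leavitt path algebra: vertices, edges and ghost edges. -/
inductive LGen (G : DirGraph) : Type
  | vert (v : G.V)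
  | edge (e : G.E)
  | ghost (e : G.E)

open FreeAlgebra in
/-- The defining relations of the Leavitt path algebra of a finite graph. -/
inductive LRel (K : Type) [Field K] (G : DirGraph) :
    FreeAlgebra K (LGen G) → FreeAlgebra K (LGen G) → Prop
  | vert_mul (v w : G.V) : LRel K G (ι K (LGen.vert v) * ι K (LGen.vert w))
      (if v = w then ι K (LGen.vert v) else 0)
  | sum_verts : LRel K G (∑ v : G.V, ι K (LGen.vert v)) 1
  | s_edge (e : G.E) : LRel K G (ι K (LGen.vert (G.s e)) * ι K (LGen.edge e)) (ι K (LGen.edge e))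
  | edge_r (e : G.E) : LRel K G (ι K (LGen.edge e) * ι K (LGen.vert (G.r e))) (ι K (LGen.edge e))
  | r_ghost (e : G.E) : LRel K G (ι K (LGen.vert (G.r e)) * ι K (LGen.ghost e)) (ι K (LGen.ghost e))
  | ghost_s (e : G.E) : LRel K G (ι K (LGen.ghost e) * ι K (LGen.vert (G.s e))) (ι K (LGen.ghost e))
  | ck1 (e f : G.E) : LRel K G (ι K (LGen.ghost e) * ι K (LGen.edge f))
      (if e = f then ι K (LGen.vert (G.r e)) else 0)
  | ck2 (v : G.V) (h : ¬ G.IsSink v) :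
      LRel K G (∑ e ∈ Finset.univ.filter (fun e => G.s e = v),
        ι K (LGen.edge e) * ι K (LGen.ghost e)) (ι K (LGen.vert v))

/-- The Leavitt path algebra of a finite graph `G` over the field `K`. -/
def LPA (K : Type) [Field K] (G : DirGraph) : Type := RingQuot (LRel K G)

instance (K : Type) [Field K] (G : DirGraph) : Ring (LPA K G) :=
  inferInstanceAs (Ring (RingQuot (LRel K G)))
instance (K : Type) [Field K] (G : DirGraph) : Algebra K (LPA K G) :=
  inferInstanceAs (Algebra K (RingQuot (LRel K G)))

/-- The image of a generator in the Leavitt path algebra. -/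
def LPA.gen (K : Type) [Field K] (G : DirGraph) (g : LGen G) : LPA K G :=
  RingQuot.mkAlgHom K (LRel K G) (FreeAlgebra.ι K g)

/-- The vertex idempotent `v ∈ L_K(G)`. -/
def LPA.vert (K : Type) [Field K] (G : DirGraph) (v : G.V) : LPA K G :=
  LPA.gen K G (LGen.vert v)

/-- Weight of a generator: `deg v = 0`, `deg e = 1`, `deg e* = -1`. -/
def LGen.wt {G : DirGraph} : LGen G → ℤ
  | .vert _ => 0
  | .edge _ => 1
  | .ghost _ => -1

/-- The degree-`n` component of the natural ℤ-grading of the Leavitt path algebra: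
the `K`-span of all monomials in the generators of total weight `n`. -/
def lpaComp (K : Type) [Field K] (G : DirGraph) (n : ℤ) : Submodule K (LPA K G) :=
  Submodule.span K {x | ∃ l : List (LGen G),
    (l.map LGen.wt).sum = n ∧ x = (l.map (LPA.gen K G)).prod}

/-- `L_K(G)` is strongly graded: `AᵢAⱼ = Aᵢ₊ⱼ` for all `i, j ∈ ℤ`. -/
def LPAStronglyGraded (K : Type) [Field K] (G : DirGraph) : Prop :=
  ∀ m n : ℤ, lpaComp K G m * lpaComp K G n = lpaComp K G (m + n)

/-!
Write `A n` for `lpaComp K G n`. As `A m * A n ≤ A (m + n)`, the grading is strong as soon as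
`1 ∈ A 1 * A (-1)` and `1 ∈ A (-1) * A 1`.

If `G` has no sinks, the relations `1 = ∑ v` and `v = ∑_{s e = v} e * r(e) * e*` write `1`, for
every `n`, as a sum of terms `a * w * b` with `a ∈ A n`, `b ∈ A (-n)` and `w` the range of a path
of length `n`. These sets of ranges decrease with `n`, so they stabilise: for some `n`, every such
`w` is also the range of a path `q` of length `n + 1`, and `a * w * b = (a * q*) * (q * b)` lies in
`A (-1) * A 1`.

If `v₀` is a sink, `L_K(G)` acts on the vector space with basis the paths ending at `v₀`, edges
prepending themselves and ghost edges deleting the first edge. An element of `A n` shifts path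
length by `n`, so `A (-1)` kills the trivial path at `v₀`, and `1 ∉ A 1 * A (-1)`.
-/

namespace SetLike.GradedMonoid

variable {K R : Type*} [CommSemiring K] [Semiring R] [Algebra K R]
  {A : ℤ → Submodule K R} [SetLike.GradedMonoid A]

theorem submodule_mul_le (i j : ℤ) : A i * A j ≤ A (i + j) :=
  Submodule.mul_le.mpr fun _ ha _ hb => SetLike.mul_mem_graded ha hb

theorem mul_mul_mul_le (i j k l : ℤ) : A i * (A j * A k) * A l ≤ A (i + j) * A (k + l) :=
  calc A i * (A j * A k) * A l = A i * A j * (A k * A l) := by simp only [mul_assoc]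
    _ ≤ A (i + j) * A (k + l) := mul_le_mul' (submodule_mul_le i j) (submodule_mul_le k l)

theorem mul_mul_mem_mul {i j k l : ℤ} {x y z : R} (hx : x ∈ A i) (hy : y ∈ A j * A k)
    (hz : z ∈ A l) : x * y * z ∈ A (i + j) * A (k + l) :=
  mul_mul_mul_le i j k l (Submodule.mul_mem_mul (Submodule.mul_mem_mul hx hy) hz)

theorem one_le_mul_add {a b c d : ℤ} (hab : 1 ≤ A a * A b) (hcd : 1 ≤ A c * A d) :
    1 ≤ A (a + c) * A (d + b) :=
  calc 1 ≤ A a * 1 * A b := by rwa [mul_one]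
    _ ≤ A a * (A c * A d) * A b := by gcongr
    _ ≤ A (a + c) * A (d + b) := mul_mul_mul_le a c d b

theorem one_le_neg_mul (h₁ : 1 ≤ A 1 * A (-1)) (h₂ : 1 ≤ A (-1) * A 1) (n : ℤ) :
    1 ≤ A (-n) * A n := by
  induction n using Int.induction_on with
  | zero => simpa using one_le_mul_add h₂ h₁
  | succ i ih => convert one_le_mul_add ih h₂ using 3 <;> ring
  | pred i ih => convert one_le_mul_add ih h₁ using 3 <;> ring

theorem mul_eq_of_one_le (h₁ : 1 ≤ A 1 * A (-1)) (h₂ : 1 ≤ A (-1) * A 1) (m n : ℤ) :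
    A m * A n = A (m + n) := by
  refine le_antisymm (submodule_mul_le m n) ?_
  calc A (m + n) = A (m + n) * 1 := (mul_one _).symm
    _ ≤ A (m + n) * (A (-n) * A n) := by gcongr; exact one_le_neg_mul h₁ h₂ n
    _ = A (m + n) * A (-n) * A n := (mul_assoc _ _ _).symm
    _ ≤ A (m + n + -n) * A n := by gcongr; exact submodule_mul_le _ _
    _ = A m * A n := by rw [add_neg_cancel_right]

theorem forall_mul_eq_iff_one_le :
    (∀ m n, A m * A n = A (m + n)) ↔ 1 ≤ A 1 * A (-1) ∧ 1 ≤ A (-1) * A 1 := by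
  refine ⟨fun h => ⟨?_, ?_⟩, fun h => mul_eq_of_one_le h.1 h.2⟩ <;>
    simpa [h] using Submodule.one_le.mpr (SetLike.GradedOne.one_mem (A := A))

end SetLike.GradedMonoid

namespace LPA

variable {K : Type} [Field K] {G : DirGraph}

variable (K G) in
noncomputable def edge (e : G.E) : LPA K G := LPA.gen K G (.edge e)

variable (K G) in
noncomputable def ghost (e : G.E) : LPA K G := LPA.gen K G (.ghost e)

theorem sum_vert : ∑ v : G.V, LPA.vert K G v = 1 :=
  (map_sum (RingQuot.mkAlgHom K (LRel K G)) _ _).symm.trans <|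
    (RingQuot.mkAlgHom_rel K LRel.sum_verts).trans (map_one _)

theorem edge_mul_vert_r (e : G.E) : edge K G e * LPA.vert K G (G.r e) = edge K G e :=
  (map_mul (RingQuot.mkAlgHom K (LRel K G)) _ _).symm.trans <|
    RingQuot.mkAlgHom_rel K (LRel.edge_r e)

theorem ghost_mul_vert_s (e : G.E) : ghost K G e * LPA.vert K G (G.s e) = ghost K G e :=
  (map_mul (RingQuot.mkAlgHom K (LRel K G)) _ _).symm.trans <|
    RingQuot.mkAlgHom_rel K (LRel.ghost_s e)

theorem ghost_mul_edge (e : G.E) : ghost K G e * edge K G e = LPA.vert K G (G.r e) :=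
  (map_mul (RingQuot.mkAlgHom K (LRel K G)) _ _).symm.trans <|
    (RingQuot.mkAlgHom_rel K (LRel.ck1 e e)).trans (congrArg _ (if_pos rfl))

theorem sum_edge_mul_ghost {v : G.V} (hv : ¬ G.IsSink v) :
    ∑ e ∈ Finset.univ.filter (fun e => G.s e = v), edge K G e * ghost K G e =
      LPA.vert K G v :=
  (Finset.sum_congr rfl fun _ _ => (map_mul _ _ _).symm).trans <|
    (map_sum (RingQuot.mkAlgHom K (LRel K G)) _ _).symm.trans <|
      RingQuot.mkAlgHom_rel K (LRel.ck2 v hv)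

theorem gen_mem_lpaComp (g : LGen G) : LPA.gen K G g ∈ lpaComp K G g.wt :=
  Submodule.subset_span ⟨[g], by simp, by simp⟩

theorem vert_mem_lpaComp (v : G.V) : LPA.vert K G v ∈ lpaComp K G 0 :=
  gen_mem_lpaComp (.vert v)

theorem edge_mem_lpaComp (e : G.E) : edge K G e ∈ lpaComp K G 1 :=
  gen_mem_lpaComp (.edge e)

theorem ghost_mem_lpaComp (e : G.E) : ghost K G e ∈ lpaComp K G (-1) :=
  gen_mem_lpaComp (.ghost e)

instance : SetLike.GradedMonoid (lpaComp K G) where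
  one_mem := Submodule.subset_span ⟨[], by simp, by simp⟩
  mul_mem i j a b ha hb := by
    suffices lpaComp K G i * lpaComp K G j ≤ lpaComp K G (i + j) from
      this (Submodule.mul_mem_mul ha hb)
    rw [lpaComp, lpaComp, Submodule.span_mul_span, Submodule.span_le]
    rintro _ ⟨_, ⟨l₁, rfl, rfl⟩, _, ⟨l₂, rfl, rfl⟩, rfl⟩
    exact Submodule.subset_span ⟨l₁ ++ l₂, by simp, by simp⟩

end LPA

namespace DirGraph

variable (G : DirGraph)

/-- `G.pathRanges n` is the set of ranges of the paths of length `n`. -/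
def pathRanges : ℕ → Finset G.V
  | 0 => Finset.univ
  | n + 1 => (Finset.univ.filter fun e => G.s e ∈ pathRanges n).image G.r

variable {G}

theorem mem_pathRanges_succ {n : ℕ} {w : G.V} :
    w ∈ G.pathRanges (n + 1) ↔ ∃ e, G.s e ∈ G.pathRanges n ∧ G.r e = w := by
  simp [pathRanges]

theorem pathRanges_succ_subset (n : ℕ) : G.pathRanges (n + 1) ⊆ G.pathRanges n := by
  induction n with
  | zero => exact Finset.subset_univ _
  | succ n ih =>
    exact Finset.image_subset_image (Finset.monotone_filter_right _ fun _ _ h => ih h)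

theorem exists_pathRanges_subset_succ : ∃ n, G.pathRanges n ⊆ G.pathRanges (n + 1) := by
  have anti : Antitone G.pathRanges := antitone_nat_of_succ_le pathRanges_succ_subset
  obtain ⟨i, j, hij, h⟩ := Finite.exists_ne_map_eq_of_infinite G.pathRanges
  rcases hij.lt_or_gt with hlt | hlt
  · exact ⟨i, h ▸ anti hlt⟩
  · exact ⟨j, h.symm ▸ anti hlt⟩

end DirGraph

namespace LPA

variable {K : Type} [Field K] {G : DirGraph}

open SetLike.GradedMonoid

variable (K G) in
noncomputable def sandwich (n : ℕ) : Submodule K (LPA K G) :=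
  Submodule.span K {x | ∃ a ∈ lpaComp K G n, ∃ w ∈ G.pathRanges n, ∃ b ∈ lpaComp K G (-n),
    x = a * LPA.vert K G w * b}

theorem vert_mem_neg_mul_of_mem_pathRanges {n : ℕ} {w : G.V} (hw : w ∈ G.pathRanges n) :
    LPA.vert K G w ∈ lpaComp K G (-n) * lpaComp K G n := by
  induction n generalizing w with
  | zero =>
    simpa using Submodule.mul_mem_mul (vert_mem_lpaComp (K := K) w) SetLike.GradedOne.one_mem
  | succ n ih =>
    obtain ⟨e, he, rfl⟩ := DirGraph.mem_pathRanges_succ.mp hw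
    rw [← ghost_mul_edge, ← ghost_mul_vert_s]
    convert mul_mul_mem_mul (ghost_mem_lpaComp e) (ih he) (edge_mem_lpaComp e) using 3 <;>
      push_cast <;> ring

theorem sandwich_le_sandwich_succ (hG : ¬ ∃ v, G.IsSink v) (n : ℕ) :
    sandwich K G n ≤ sandwich K G (n + 1) := by
  refine Submodule.span_le.mpr ?_
  rintro _ ⟨a, ha, w, hw, b, hb, rfl⟩
  rw [← sum_edge_mul_ghost fun hw' => hG ⟨w, hw'⟩, Finset.mul_sum, Finset.sum_mul]
  refine Submodule.sum_mem _ fun e he => Submodule.subset_span ?_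
  refine ⟨a * edge K G e, ?_, G.r e, ?_, ghost K G e * b, ?_, ?_⟩
  · exact_mod_cast SetLike.mul_mem_graded ha (edge_mem_lpaComp e)
  · exact DirGraph.mem_pathRanges_succ.mpr ⟨e, (Finset.mem_filter.mp he).2 ▸ hw, rfl⟩
  · convert SetLike.mul_mem_graded (ghost_mem_lpaComp e) hb using 3
    push_cast; ring
  · simp only [mul_assoc]
    rw [← mul_assoc (edge K G e) (LPA.vert K G (G.r e)), edge_mul_vert_r]

theorem one_mem_sandwich (hG : ¬ ∃ v, G.IsSink v) (n : ℕ) : 1 ∈ sandwich K G n := by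
  induction n with
  | zero =>
    rw [← sum_vert]
    have h₀ : (1 : LPA K G) ∈ lpaComp K G 0 := SetLike.GradedOne.one_mem
    exact Submodule.sum_mem _ fun v _ => Submodule.subset_span
      ⟨1, by simpa using h₀, v, Finset.mem_univ v, 1, by simpa using h₀, by simp⟩
  | succ n ih => exact sandwich_le_sandwich_succ hG n ih

theorem sandwich_le_mul (n : ℕ) : sandwich K G n ≤ lpaComp K G n * lpaComp K G (-n) := by
  refine Submodule.span_le.mpr ?_
  rintro _ ⟨a, ha, w, -, b, hb, rfl⟩
  simpa using Submodule.mul_mem_mul (SetLike.mul_mem_graded ha (vert_mem_lpaComp (K := K) w)) hb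

theorem sandwich_le_neg_mul {n : ℕ} (hn : G.pathRanges n ⊆ G.pathRanges (n + 1)) :
    sandwich K G n ≤ lpaComp K G (-1) * lpaComp K G 1 := by
  refine Submodule.span_le.mpr ?_
  rintro _ ⟨a, ha, w, hw, b, hb, rfl⟩
  rw [SetLike.mem_coe]
  convert mul_mul_mem_mul ha (vert_mem_neg_mul_of_mem_pathRanges (hn hw)) hb using 3 <;>
    push_cast <;> ring

theorem one_mem_neg_mul (hG : ¬ ∃ v, G.IsSink v) :
    (1 : LPA K G) ∈ lpaComp K G (-1) * lpaComp K G 1 :=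
  have ⟨_, hn⟩ := G.exists_pathRanges_subset_succ
  sandwich_le_neg_mul hn (one_mem_sandwich hG _)

theorem one_mem_mul_neg (hG : ¬ ∃ v, G.IsSink v) :
    (1 : LPA K G) ∈ lpaComp K G 1 * lpaComp K G (-1) := by
  simpa using sandwich_le_mul 1 (one_mem_sandwich (K := K) hG 1)

end LPA

namespace DirGraph

inductive IsPath (G : DirGraph) : G.V → G.V → List G.E → Prop
  | nil (v : G.V) : IsPath G v v []
  | cons (e : G.E) {w : G.V} {l : List G.E} : IsPath G (G.r e) w l → IsPath G (G.s e) w (e :: l)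

variable {G : DirGraph}

theorem IsPath.eq_of_nil {u w : G.V} (h : G.IsPath u w []) : u = w := by
  cases h; rfl

theorem IsPath.eq_s_of_cons {u w : G.V} {e : G.E} {l : List G.E} (h : G.IsPath u w (e :: l)) :
    u = G.s e := by
  cases h; rfl

theorem IsPath.tail {u w : G.V} {e : G.E} {l : List G.E} (h : G.IsPath u w (e :: l)) :
    G.IsPath (G.r e) w l := by
  cases h; assumption

variable (G) in
abbrev PathTo (v₀ : G.V) : Type := {p : G.V × List G.E // G.IsPath p.1 v₀ p.2}

end DirGraph

namespace LPA

open DirGraph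

variable (K : Type) [Field K] {G : DirGraph} (v₀ : G.V)

noncomputable def pathAct : LGen G → G.PathTo v₀ → (G.PathTo v₀ →₀ K)
  | .vert w, p => if p.1.1 = w then Finsupp.single p 1 else 0
  | .edge e, ⟨(u, l), h⟩ =>
    if hu : G.r e = u then Finsupp.single ⟨(G.s e, e :: l), .cons e (hu ▸ h)⟩ 1 else 0
  | .ghost _, ⟨(_, []), _⟩ => 0
  | .ghost e, ⟨(_, f :: l), h⟩ => if f = e then Finsupp.single ⟨(G.r f, l), h.tail⟩ 1 else 0

noncomputable def freePathRep : FreeAlgebra K (LGen G) →ₐ[K] Module.End K (G.PathTo v₀ →₀ K) :=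
  FreeAlgebra.lift K fun g => Finsupp.linearCombination K (pathAct K v₀ g)

theorem freePathRep_ι (g : LGen G) :
    freePathRep K v₀ (FreeAlgebra.ι K g) = Finsupp.linearCombination K (pathAct K v₀ g) :=
  FreeAlgebra.lift_ι_apply _ _

variable {K v₀}

theorem freePathRep_rel (hv₀ : G.IsSink v₀) {x y : FreeAlgebra K (LGen G)} (h : LRel K G x y) :
    freePathRep K v₀ x = freePathRep K v₀ y := by
  induction h with
  | vert_mul v w =>
    ext ⟨⟨u, l⟩, hp⟩ : 2
    obtain rfl | hvw := eq_or_ne v w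
    · by_cases hu : u = v <;> simp [freePathRep_ι, pathAct, hu]
    · by_cases hu : u = w <;> simp [freePathRep_ι, pathAct, hu, hvw, hvw.symm]
  | sum_verts =>
    ext ⟨⟨u, l⟩, hp⟩ : 2
    simp [freePathRep_ι, pathAct]
  | s_edge e =>
    ext ⟨⟨u, l⟩, hp⟩ : 2
    by_cases hu : G.r e = u <;> simp [freePathRep_ι, pathAct, hu]
  | edge_r e =>
    ext ⟨⟨u, l⟩, hp⟩ : 2
    obtain rfl | hu := eq_or_ne u (G.r e)
    · simp [freePathRep_ι, pathAct]
    · simp [freePathRep_ι, pathAct, hu, hu.symm]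
  | r_ghost e =>
    ext ⟨⟨u, _ | ⟨f, l⟩⟩, hp⟩ : 2
    · simp [freePathRep_ι, pathAct]
    · by_cases hf : f = e <;> simp [freePathRep_ι, pathAct, hf]
  | ghost_s e =>
    ext ⟨⟨u, _ | ⟨f, l⟩⟩, hp⟩ : 2
    · by_cases hu : u = G.s e <;> simp [freePathRep_ι, pathAct, hu]
    · obtain rfl := hp.eq_s_of_cons
      by_cases hf : f = e
      · simp [freePathRep_ι, pathAct, hf]
      · by_cases hs : G.s f = G.s e <;> simp [freePathRep_ι, pathAct, hf, hs]
  | ck1 e f =>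
    ext ⟨⟨u, l⟩, hp⟩ : 2
    obtain rfl | hef := eq_or_ne e f
    · obtain rfl | hu := eq_or_ne u (G.r e)
      · simp [freePathRep_ι, pathAct]
      · simp [freePathRep_ι, pathAct, hu, hu.symm]
    · by_cases hu : G.r f = u <;> simp [freePathRep_ι, pathAct, hef, hef.symm, hu]
  | ck2 w hw =>
    ext ⟨⟨u, _ | ⟨f, l⟩⟩, hp⟩ : 2
    · obtain rfl := hp.eq_of_nil
      have huw : u ≠ w := fun h => hw (h ▸ hv₀)
      simp [freePathRep_ι, pathAct, huw]
    · obtain rfl := hp.eq_s_of_cons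
      simp [freePathRep_ι, pathAct, apply_ite (Finsupp.linearCombination K _)]

variable (K) in
noncomputable def pathRep (hv₀ : G.IsSink v₀) : LPA K G →ₐ[K] Module.End K (G.PathTo v₀ →₀ K) :=
  RingQuot.liftAlgHom K ⟨freePathRep K v₀, fun _ _ => freePathRep_rel hv₀⟩

theorem pathRep_gen (hv₀ : G.IsSink v₀) (g : LGen G) :
    pathRep K hv₀ (LPA.gen K G g) = Finsupp.linearCombination K (pathAct K v₀ g) :=
  (RingQuot.liftAlgHom_mkAlgHom_apply K _ _ _).trans (freePathRep_ι K v₀ g)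

variable (K v₀) in
noncomputable def pathsOfLength (k : ℤ) : Submodule K (G.PathTo v₀ →₀ K) :=
  Finsupp.supported K K {p | (p.1.2.length : ℤ) = k}

theorem pathAct_mem_pathsOfLength (g : LGen G) (p : G.PathTo v₀) :
    pathAct K v₀ g p ∈ pathsOfLength K v₀ (p.1.2.length + g.wt) := by
  rcases p with ⟨⟨u, _ | ⟨f, l⟩⟩, hp⟩ <;> cases g <;>
    simp only [pathAct] <;> (try split_ifs) <;>
    simp [pathsOfLength, Finsupp.single_mem_supported, LGen.wt]

theorem linearCombination_pathAct_mem {g : LGen G} {k : ℤ} {x : G.PathTo v₀ →₀ K}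
    (hx : x ∈ pathsOfLength K v₀ k) :
    Finsupp.linearCombination K (pathAct K v₀ g) x ∈ pathsOfLength K v₀ (k + g.wt) := by
  rw [Finsupp.linearCombination_apply]
  refine Submodule.sum_mem _ fun p hp => Submodule.smul_mem _ _ ?_
  rw [← (Finsupp.mem_supported K x).mp hx hp]
  exact pathAct_mem_pathsOfLength g p

theorem pathRep_prod_gen_mem (hv₀ : G.IsSink v₀) (l : List (LGen G)) {k : ℤ}
    {x : G.PathTo v₀ →₀ K} (hx : x ∈ pathsOfLength K v₀ k) :
    pathRep K hv₀ (l.map (LPA.gen K G)).prod x ∈ pathsOfLength K v₀ (k + (l.map LGen.wt).sum) := by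
  induction l with
  | nil => simpa using hx
  | cons g l ih =>
    simpa [pathRep_gen, add_comm, add_left_comm] using linearCombination_pathAct_mem (g := g) ih

theorem pathRep_mem (hv₀ : G.IsSink v₀) {n : ℤ} {y : LPA K G} (hy : y ∈ lpaComp K G n) {k : ℤ}
    {x : G.PathTo v₀ →₀ K} (hx : x ∈ pathsOfLength K v₀ k) :
    pathRep K hv₀ y x ∈ pathsOfLength K v₀ (k + n) := by
  induction hy using Submodule.span_induction with
  | mem _ h =>
    obtain ⟨l, rfl, rfl⟩ := h
    exact pathRep_prod_gen_mem hv₀ l hx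
  | zero => simp
  | add _ _ _ _ h₁ h₂ => simpa using add_mem h₁ h₂
  | smul c _ _ h => simpa using Submodule.smul_mem _ c h

theorem pathsOfLength_eq_bot {k : ℤ} (hk : k < 0) : pathsOfLength K v₀ k = ⊥ := by
  have : {p : G.PathTo v₀ | (p.1.2.length : ℤ) = k} = ∅ :=
    Set.eq_empty_of_forall_notMem fun p (hp : (p.1.2.length : ℤ) = k) => by omega
  rw [pathsOfLength, this, Finsupp.supported_empty]

theorem one_notMem_mul_neg_of_isSink (hv₀ : G.IsSink v₀) :
    (1 : LPA K G) ∉ lpaComp K G 1 * lpaComp K G (-1) := by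
  set x₀ : G.PathTo v₀ →₀ K := Finsupp.single ⟨(v₀, []), .nil v₀⟩ 1
  have hx₀ : x₀ ∈ pathsOfLength K v₀ 0 := by simp [x₀, pathsOfLength, Finsupp.single_mem_supported]
  intro h
  have hx₀_eq_zero : pathRep K hv₀ 1 x₀ = 0 := by
    refine Submodule.mul_induction_on h (fun a _ b hb => ?_) (fun _ _ h₁ h₂ => ?_)
    · have hbx₀ := pathRep_mem hv₀ hb hx₀
      rw [pathsOfLength_eq_bot (by norm_num), Submodule.mem_bot] at hbx₀
      simp [hbx₀]
    · simp [h₁, h₂]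
  simp [x₀] at hx₀_eq_zero

end LPA

/-- Let `E` be a finite directed graph.  The Leavitt path algebra
`L_K(E)` over a field `K`, with its natural ℤ-grading, is a strongly graded ring if and
only if `E` has no sinks. -/
theorem lpa_strongly_graded_iff_no_sinks (K : Type) [Field K] (G : DirGraph) :
    LPAStronglyGraded K G ↔ ¬ ∃ v : G.V, G.IsSink v := by
  rw [LPAStronglyGraded, SetLike.GradedMonoid.forall_mul_eq_iff_one_le, Submodule.one_le,
    Submodule.one_le]
  exact ⟨fun h ⟨_, hv⟩ => LPA.one_notMem_mul_neg_of_isSink hv h.1,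
    fun hG => ⟨LPA.one_mem_mul_neg hG, LPA.one_mem_neg_mul hG⟩⟩
end

section
/- Let E be a finite directed graph with no sources, and let t₊ = e₁ + ... + eₙ, t₋ = e₁* + ... + eₙ* be as above, where eᵢ is a chosen edge with r(eᵢ) = vᵢ for each vertex vᵢ. Then t₊t₋ is a full idempotent of L_K(E)₀ if and only if E has no sinks. -/
/-! If `E` has no sinks, (CK2) gives `1 = ∑ₑ e e*`, and since `t₋t₊ = 1` every `a ∈ L_K(E)₀` is
`∑ₑ (a e t₋) (t₊t₋) (t₊ e*)` with both outer factors of degree `0`.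

If `w` is a sink, let `L_K(E)` act on the vector space with basis the paths ending at sinks.
An element of degree `m` raises path length by `m`, so `t₋` kills everything that `L_K(E)₀` makes
out of the trivial path at `w`. Hence the ideal of `L_K(E)₀` generated by `t₊t₋` annihilates
that path, while `w` fixes it. -/

namespace LPA

variable {K : Type} [Field K] {G : DirGraph}

theorem lpaComp_mul_le (m n : ℤ) : lpaComp K G m * lpaComp K G n ≤ lpaComp K G (m + n) := by
  rw [lpaComp, lpaComp, Submodule.span_mul_span, Submodule.span_le]
  rintro _ ⟨_, ⟨l₁, rfl, rfl⟩, _, ⟨l₂, rfl, rfl⟩, rfl⟩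
  exact Submodule.subset_span ⟨l₁ ++ l₂, by simp, by simp⟩

theorem mul_mem_lpaComp {m n : ℤ} {a b : LPA K G} (ha : a ∈ lpaComp K G m)
    (hb : b ∈ lpaComp K G n) : a * b ∈ lpaComp K G (m + n) :=
  lpaComp_mul_le m n (Submodule.mul_mem_mul ha hb)

-- `RingQuot.mkAlgHom` typed so that `simp` rewrites into the ring structure of `LPA K G`.
def mkAlgHom : FreeAlgebra K (LGen G) →ₐ[K] LPA K G := RingQuot.mkAlgHom K (LRel K G)

theorem mkAlgHom_ι (g : LGen G) : mkAlgHom (FreeAlgebra.ι K g) = LPA.gen K G g := rfl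

theorem mkAlgHom_rel {x y : FreeAlgebra K (LGen G)} (h : LRel K G x y) :
    mkAlgHom x = mkAlgHom y :=
  RingQuot.mkAlgHom_rel K h

theorem sum_gen_vert : ∑ v : G.V, LPA.gen K G (.vert v) = 1 := by
  simpa [mkAlgHom_ι] using mkAlgHom_rel (LRel.sum_verts (K := K) (G := G))

theorem gen_ghost_mul_gen_edge (e f : G.E) :
    LPA.gen K G (.ghost e) * LPA.gen K G (.edge f) =
      if e = f then LPA.gen K G (.vert (G.r e)) else 0 := by
  simpa [apply_ite mkAlgHom, mkAlgHom_ι] using mkAlgHom_rel (LRel.ck1 (K := K) e f)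

theorem sum_gen_edge_mul_gen_ghost {v : G.V} (hv : ¬ G.IsSink v) :
    ∑ e ∈ Finset.univ.filter (fun e => G.s e = v),
      LPA.gen K G (.edge e) * LPA.gen K G (.ghost e) = LPA.gen K G (.vert v) := by
  simpa [mkAlgHom_ι] using mkAlgHom_rel (LRel.ck2 (K := K) v hv)

theorem sum_gen_edge_mul_gen_ghost_eq_one (hG : ∀ v, ¬ G.IsSink v) :
    ∑ e : G.E, LPA.gen K G (.edge e) * LPA.gen K G (.ghost e) = 1 := by
  rw [← sum_gen_vert, ← Finset.sum_fiberwise_of_maps_to (g := G.s) (fun e _ => Finset.mem_univ _)]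
  exact Finset.sum_congr rfl fun v _ => sum_gen_edge_mul_gen_ghost (hG v)

theorem sum_gen_ghost_mul_sum_gen_edge {c : G.V → G.E} (hc : ∀ v, G.r (c v) = v) :
    (∑ v, LPA.gen K G (.ghost (c v))) * ∑ v, LPA.gen K G (.edge (c v)) = 1 := by
  have hinj : Function.Injective c := fun v w h => by rw [← hc v, ← hc w, h]
  simp_rw [Finset.sum_mul_sum, gen_ghost_mul_gen_edge, hinj.eq_iff, hc]
  simpa using sum_gen_vert

theorem mem_closure_of_forall_not_isSink (hG : ∀ v, ¬ G.IsSink v) {x y a : LPA K G}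
    (hx : x ∈ lpaComp K G 1) (hy : y ∈ lpaComp K G (-1)) (hyx : y * x = 1)
    (ha : a ∈ lpaComp K G 0) :
    a ∈ AddSubgroup.closure
      {z | ∃ r ∈ lpaComp K G 0, ∃ r' ∈ lpaComp K G 0, z = r * (x * y) * r'} := by
  have hyx' : ∀ z, y * (x * z) = z := fun z => by rw [← mul_assoc, hyx, one_mul]
  -- `a = ∑ₑ (a e y) (x y) (x e*)`
  rw [← mul_one a, ← sum_gen_edge_mul_gen_ghost_eq_one hG, Finset.mul_sum]
  refine AddSubgroup.sum_mem _ fun e _ => AddSubgroup.subset_closure ?_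
  refine ⟨a * LPA.gen K G (.edge e) * y, ?_, x * LPA.gen K G (.ghost e), ?_, ?_⟩
  · simpa [LGen.wt] using mul_mem_lpaComp (mul_mem_lpaComp ha (gen_mem_lpaComp (.edge e))) hy
  · simpa [LGen.wt] using mul_mem_lpaComp hx (gen_mem_lpaComp (.ghost e))
  · simp only [mul_assoc, hyx']

theorem rep_apply_mem_of_mem_lpaComp {M : Type*} [AddCommGroup M] [Module K M]
    (ρ : LPA K G →ₐ[K] Module.End K M) (N : ℤ → Submodule K M)
    (hρ : ∀ g n, ∀ x ∈ N n, ρ (LPA.gen K G g) x ∈ N (n + g.wt)) {m n : ℤ} {a : LPA K G}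
    (ha : a ∈ lpaComp K G m) {x : M} (hx : x ∈ N n) : ρ a x ∈ N (n + m) := by
  have hprod : ∀ (l : List (LGen G)) {n : ℤ} {x : M}, x ∈ N n →
      ρ (l.map (LPA.gen K G)).prod x ∈ N (n + (l.map LGen.wt).sum) := by
    intro l
    induction l with
    | nil => simp
    | cons g l ih =>
      intro n x hx
      simpa [add_comm, add_left_comm] using hρ g _ _ (ih hx)
  induction ha using Submodule.span_induction with
  | mem a ha =>
    obtain ⟨l, rfl, rfl⟩ := ha
    exact hprod l hx
  | zero => simp
  | add a b _ _ ha hb => simpa using add_mem ha hb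
  | smul k a _ ha => simpa using Submodule.smul_mem _ k ha

end LPA

namespace DirGraph

variable (G : DirGraph)

inductive SinkPath : G.V → Type
  | nil {v : G.V} (hv : G.IsSink v) : SinkPath v
  | cons (e : G.E) (p : SinkPath (G.r e)) : SinkPath (G.s e)

variable {G}

def SinkPath.length : {v : G.V} → G.SinkPath v → ℕ
  | _, .nil _ => 0
  | _, .cons _ p => p.length + 1

end DirGraph

namespace LPA

open DirGraph

section SinkPathRep

variable (K : Type) [Field K] {G : DirGraph}

noncomputable def sinkPathGenAct : LGen G → (Σ v, G.SinkPath v) → ((Σ v, G.SinkPath v) →₀ K)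
  | .vert v, ⟨u, p⟩ => if u = v then Finsupp.single ⟨u, p⟩ 1 else 0
  | .edge e, ⟨u, p⟩ => if h : u = G.r e then Finsupp.single ⟨G.s e, .cons e (h ▸ p)⟩ 1 else 0
  | .ghost _, ⟨_, .nil _⟩ => 0
  | .ghost e, ⟨_, .cons f p⟩ => if f = e then Finsupp.single ⟨G.r f, p⟩ 1 else 0

noncomputable def sinkPathAct (g : LGen G) : Module.End K ((Σ v, G.SinkPath v) →₀ K) :=
  Finsupp.linearCombination K (sinkPathGenAct K g)

@[simp]
theorem sinkPathAct_single (g : LGen G) (x : Σ v, G.SinkPath v) :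
    sinkPathAct K g (Finsupp.single x 1) = sinkPathGenAct K g x := by
  simp [sinkPathAct]

theorem sinkPathAct_ext {f f' : Module.End K ((Σ v, G.SinkPath v) →₀ K)}
    (h : ∀ x, f (Finsupp.single x 1) = f' (Finsupp.single x 1)) : f = f' :=
  Finsupp.basisSingleOne.ext fun x => by simpa using h x

theorem sinkPathAct_vert_mul_vert (v w : G.V) :
    sinkPathAct K (.vert v) * sinkPathAct K (.vert w) =
      if v = w then sinkPathAct K (G := G) (.vert v) else 0 := by
  refine sinkPathAct_ext K fun ⟨u, p⟩ => ?_
  by_cases huw : u = w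
  · subst huw; by_cases hvu : v = u <;> simp [sinkPathGenAct, hvu, eq_comm]
  · split_ifs with hvw
    · subst hvw; simp [sinkPathGenAct, huw]
    · simp [sinkPathGenAct, huw]

theorem sum_sinkPathAct_vert : ∑ v, sinkPathAct K (G := G) (.vert v) = 1 :=
  sinkPathAct_ext K fun ⟨u, p⟩ => by simp [sinkPathGenAct]

theorem sinkPathAct_vert_mul_edge (e : G.E) :
    sinkPathAct K (.vert (G.s e)) * sinkPathAct K (.edge e) = sinkPathAct K (.edge e) := by
  refine sinkPathAct_ext K fun ⟨u, p⟩ => ?_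
  by_cases h : u = G.r e
  · subst h; simp [sinkPathGenAct]
  · simp [sinkPathGenAct, h]

theorem sinkPathAct_edge_mul_vert (e : G.E) :
    sinkPathAct K (.edge e) * sinkPathAct K (.vert (G.r e)) = sinkPathAct K (.edge e) := by
  refine sinkPathAct_ext K fun ⟨u, p⟩ => ?_
  by_cases h : u = G.r e
  · subst h; simp [sinkPathGenAct]
  · simp [sinkPathGenAct, h]

theorem sinkPathAct_vert_mul_ghost (e : G.E) :
    sinkPathAct K (.vert (G.r e)) * sinkPathAct K (.ghost e) = sinkPathAct K (.ghost e) := by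
  refine sinkPathAct_ext K fun x => ?_
  rcases x with ⟨_, _ | ⟨f, p⟩⟩
  · simp [sinkPathGenAct]
  · by_cases h : f = e
    · subst h; simp [sinkPathGenAct]
    · simp [sinkPathGenAct, h]

theorem sinkPathAct_ghost_mul_vert (e : G.E) :
    sinkPathAct K (.ghost e) * sinkPathAct K (.vert (G.s e)) = sinkPathAct K (.ghost e) := by
  refine sinkPathAct_ext K fun x => ?_
  rcases x with ⟨u, _ | ⟨f, p⟩⟩
  · by_cases h : u = G.s e <;> simp [sinkPathGenAct, h]
  · by_cases h : f = e
    · subst h; simp [sinkPathGenAct]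
    · by_cases h' : G.s f = G.s e <;> simp [sinkPathGenAct, h, h']

theorem sinkPathAct_ghost_mul_edge (e f : G.E) :
    sinkPathAct K (.ghost e) * sinkPathAct K (.edge f) =
      if e = f then sinkPathAct K (G := G) (.vert (G.r e)) else 0 := by
  refine sinkPathAct_ext K fun ⟨u, p⟩ => ?_
  by_cases h : u = G.r f
  · subst h; by_cases hef : e = f <;> simp [sinkPathGenAct, hef, eq_comm]
  · by_cases hef : e = f
    · subst hef; simp [sinkPathGenAct, h]
    · simp [sinkPathGenAct, h, hef]

theorem sum_sinkPathAct_edge_mul_ghost {v : G.V} (hv : ¬ G.IsSink v) :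
    ∑ e ∈ Finset.univ.filter (fun e => G.s e = v),
      sinkPathAct K (.edge e) * sinkPathAct K (.ghost e) = sinkPathAct K (G := G) (.vert v) := by
  refine sinkPathAct_ext K fun x => ?_
  rcases x with ⟨u, _ | ⟨f, p⟩⟩
  · have huv : u ≠ v := by rintro rfl; contradiction
    simp [sinkPathGenAct, huv]
  · by_cases h : G.s f = v
    · subst h
      rw [LinearMap.sum_apply, Finset.sum_eq_single f]
      · simp [sinkPathGenAct]
      · intro e _ hef; simp [sinkPathGenAct, Ne.symm hef]
      · simp
    · rw [LinearMap.sum_apply, Finset.sum_eq_zero]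
      · simp [sinkPathGenAct, h]
      · intro e he
        have hfe : f ≠ e := by rintro rfl; simp_all
        simp [sinkPathGenAct, hfe]

theorem sinkPathAct_lift_rel ⦃x y : FreeAlgebra K (LGen G)⦄ (h : LRel K G x y) :
    FreeAlgebra.lift K (sinkPathAct K) x = FreeAlgebra.lift K (sinkPathAct K) y := by
  cases h with
  | vert_mul v w => simpa [apply_ite (FreeAlgebra.lift K _)] using sinkPathAct_vert_mul_vert K v w
  | sum_verts => simpa using sum_sinkPathAct_vert K
  | s_edge e => simpa using sinkPathAct_vert_mul_edge K e
  | edge_r e => simpa using sinkPathAct_edge_mul_vert K e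
  | r_ghost e => simpa using sinkPathAct_vert_mul_ghost K e
  | ghost_s e => simpa using sinkPathAct_ghost_mul_vert K e
  | ck1 e f => simpa [apply_ite (FreeAlgebra.lift K _)] using sinkPathAct_ghost_mul_edge K e f
  | ck2 v hv => simpa using sum_sinkPathAct_edge_mul_ghost K hv

noncomputable def sinkPathRep : LPA K G →ₐ[K] Module.End K ((Σ v, G.SinkPath v) →₀ K) :=
  RingQuot.liftAlgHom K ⟨FreeAlgebra.lift K (sinkPathAct K), sinkPathAct_lift_rel K⟩

@[simp]
theorem sinkPathRep_gen (g : LGen G) : sinkPathRep K (LPA.gen K G g) = sinkPathAct K g :=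
  (RingQuot.liftAlgHom_mkAlgHom_apply _ _ _ _).trans (FreeAlgebra.lift_ι_apply _ _)

noncomputable def sinkPathLenSubmodule (n : ℤ) : Submodule K ((Σ v, G.SinkPath v) →₀ K) :=
  Finsupp.supported K K {x | (x.2.length : ℤ) = n}

theorem sinkPathLenSubmodule_neg_one : sinkPathLenSubmodule K (G := G) (-1) = ⊥ := by
  have hempty : {x : Σ v, G.SinkPath v | (x.2.length : ℤ) = -1} = ∅ :=
    Set.eq_empty_of_forall_notMem fun x (hx : _ = _) => by omega
  rw [sinkPathLenSubmodule, hempty, Finsupp.supported_empty]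

theorem sinkPathLenSubmodule_le_comap_sinkPathAct (g : LGen G) (n : ℤ) :
    sinkPathLenSubmodule K n ≤ (sinkPathLenSubmodule K (n + g.wt)).comap (sinkPathAct K g) := by
  rw [sinkPathLenSubmodule, Finsupp.supported_eq_span_single, Submodule.span_le]
  rintro _ ⟨⟨u, p⟩, hp : _ = _, rfl⟩
  rw [SetLike.mem_coe, Submodule.mem_comap, sinkPathAct_single]
  rcases g with v | e | e
  · simp only [sinkPathGenAct]
    split_ifs
    · exact Finsupp.single_mem_supported K _ (by simpa [LGen.wt])
    · exact zero_mem _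
  · simp only [sinkPathGenAct]
    split_ifs with h
    · subst h
      exact Finsupp.single_mem_supported K _ (by simp [SinkPath.length, LGen.wt, hp])
    · exact zero_mem _
  · rcases p with _ | ⟨f, p⟩
    · exact zero_mem _
    · simp only [sinkPathGenAct]
      split_ifs
      · refine Finsupp.single_mem_supported K _ (?_ : (p.length : ℤ) = n + -1)
        simp only [SinkPath.length] at hp
        omega
      · exact zero_mem _

theorem sinkPathRep_apply_mem_lenSubmodule {m n : ℤ} {a : LPA K G} (ha : a ∈ lpaComp K G m)
    {x : (Σ v, G.SinkPath v) →₀ K} (hx : x ∈ sinkPathLenSubmodule K n) :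
    sinkPathRep K a x ∈ sinkPathLenSubmodule K (n + m) :=
  rep_apply_mem_of_mem_lpaComp (sinkPathRep K) (sinkPathLenSubmodule K)
    (fun g n _ hx => by simpa using sinkPathLenSubmodule_le_comap_sinkPathAct K g n hx) ha hx

variable {K}

theorem gen_vert_not_mem_closure_of_isSink {w : G.V} (hw : G.IsSink w) (x : LPA K G)
    {y : LPA K G} (hy : y ∈ lpaComp K G (-1)) :
    LPA.gen K G (.vert w) ∉ AddSubgroup.closure
      {z | ∃ r ∈ lpaComp K G 0, ∃ r' ∈ lpaComp K G 0, z = r * (x * y) * r'} := by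
  set b : (Σ v, G.SinkPath v) →₀ K := Finsupp.single ⟨w, .nil hw⟩ 1
  have hb : b ∈ sinkPathLenSubmodule K 0 := Finsupp.single_mem_supported K _ rfl
  let evalAt : LPA K G →+ (Σ v, G.SinkPath v) →₀ K :=
    AddMonoidHom.mk' (fun a => sinkPathRep K a b) fun _ _ => by simp
  -- `y` lowers the path length, so it kills everything `L_K(G)₀` makes out of the trivial path `b`.
  have hker : AddSubgroup.closure
      {z | ∃ r ∈ lpaComp K G 0, ∃ r' ∈ lpaComp K G 0, z = r * (x * y) * r'} ≤ evalAt.ker := by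
    rw [AddSubgroup.closure_le]
    rintro _ ⟨r, -, r', hr', rfl⟩
    have hyb : sinkPathRep K y (sinkPathRep K r' b) = 0 := by
      simpa [sinkPathLenSubmodule_neg_one] using sinkPathRep_apply_mem_lenSubmodule K hy
        (sinkPathRep_apply_mem_lenSubmodule K hr' hb)
    simp [evalAt, mul_assoc, hyb]
  intro hmem
  simpa [evalAt, b, sinkPathGenAct] using hker hmem

end SinkPathRep

end LPA

theorem tptm_full_idempotent_iff_no_sinks_general (K : Type) [Field K] (G : DirGraph)
    (c : G.V → G.E) (hc : ∀ v, G.r (c v) = v) :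
    letI tp : LPA K G := ∑ v : G.V, LPA.gen K G (LGen.edge (c v))
    letI tm : LPA K G := ∑ v : G.V, LPA.gen K G (LGen.ghost (c v))
    ((∀ a ∈ lpaComp K G 0, a ∈ AddSubgroup.closure
        {x | ∃ r ∈ lpaComp K G 0, ∃ r' ∈ lpaComp K G 0, x = r * (tp * tm) * r'}) ↔
      ¬ ∃ v : G.V, G.IsSink v) := by
  have htp : ∑ v, LPA.gen K G (.edge (c v)) ∈ lpaComp K G 1 :=
    sum_mem fun v _ => LPA.gen_mem_lpaComp (.edge (c v))
  have htm : ∑ v, LPA.gen K G (.ghost (c v)) ∈ lpaComp K G (-1) :=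
    sum_mem fun v _ => LPA.gen_mem_lpaComp (.ghost (c v))
  constructor
  · rintro hfull ⟨w, hw⟩
    exact LPA.gen_vert_not_mem_closure_of_isSink hw _ htm
      (hfull _ (LPA.gen_mem_lpaComp (.vert w)))
  · intro hG a ha
    exact LPA.mem_closure_of_forall_not_isSink (fun v hv => hG ⟨v, hv⟩) htp htm
      (LPA.sum_gen_ghost_mul_sum_gen_edge hc) ha

/-- Let `E` be a finite directed graph with no sources, and let
`t₊ = Σ_v c v`, `t₋ = Σ_v (c v)*` where `c v` is a chosen edge with `r (c v) = v` for each
vertex `v`.  Then `t₊t₋` is a full idempotent of `L_K(E)₀` (i.e. the two-sided ideal of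
the ring `L_K(E)₀` generated by `t₊t₋`, namely the additive group generated by all
`r (t₊t₋) r'` with `r, r' ∈ L_K(E)₀`, is all of `L_K(E)₀`) if and only if `E` has no
sinks. -/
theorem tptm_full_idempotent_iff_no_sinks (K : Type) [Field K] (G : DirGraph)
    (hns : ¬ ∃ v : G.V, G.IsSource v) (c : G.V → G.E) (hc : ∀ v, G.r (c v) = v) :
    letI tp : LPA K G := ∑ v : G.V, LPA.gen K G (LGen.edge (c v))
    letI tm : LPA K G := ∑ v : G.V, LPA.gen K G (LGen.ghost (c v))
    ((∀ a ∈ lpaComp K G 0, a ∈ AddSubgroup.closure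
        {x | ∃ r ∈ lpaComp K G 0, ∃ r' ∈ lpaComp K G 0, x = r * (tp * tm) * r'}) ↔
      ¬ ∃ v : G.V, G.IsSink v) :=
  tptm_full_idempotent_iff_no_sinks_general K G c hc
end
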